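/- The relative energy is nonnegative and vanishes exactly at coinciding states: for all ρ > 0, θ > 0, ρ̃ > 0, θ̃ > 0 and all u, ũ ∈ ℝ^d, the quantity E(ρ,θ,u | ρ̃,θ̃,ũ) = (1/2)·ρ·|u - ũ|² + ρ·e(ρ,θ) - θ̃·ρ·s(ρ,θ) - (e(ρ̃,θ̃) - θ̃·s(ρ̃,θ̃) + p(ρ̃,θ̃)/ρ̃)·ρ + p(ρ̃,θ̃) satisfies E(ρ,θ,u | ρ̃,θ̃,ũ) ≥ 0, and E(ρ,θ,u | ρ̃,θ̃,ũ) = 0 if and only if (ρ,θ,u) = (ρ̃,θ̃,ũ). -/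

import Mathlib

/-- `P(Z) = Z` for `Z ≤ Z̃`, `P(Z) = (3/5)·Z^{5/3}·Z̃^{-2/3} + (2/5)·Z̃` for `Z > Z̃`. -/
noncomputable def Pfun (Zt Z : ℝ) : ℝ :=
  if Z ≤ Zt then Z else (3 / 5) * Z ^ ((5 : ℝ) / 3) * Zt ^ (-((2 : ℝ) / 3)) + (2 / 5) * Zt

/-- `S(Z) = 1 - log(Z/Z̃)` for `Z ≤ Z̃`, `S(Z) = Z̃/Z` for `Z > Z̃`. -/
noncomputable def Sfun (Zt Z : ℝ) : ℝ :=
  if Z ≤ Zt then 1 - Real.log (Z / Zt) else Zt / Z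

/-- Pressure `p(ρ,θ) = θ^{5/2}·P(ρ·θ^{-3/2})`. -/
noncomputable def pfun (Zt ρ θ : ℝ) : ℝ :=
  θ ^ ((5 : ℝ) / 2) * Pfun Zt (ρ * θ ^ (-((3 : ℝ) / 2)))

/-- Specific internal energy `e(ρ,θ) = (3/2)·θ^{5/2}·P(ρ·θ^{-3/2})/ρ`. -/
noncomputable def efun (Zt ρ θ : ℝ) : ℝ :=
  (3 / 2) * θ ^ ((5 : ℝ) / 2) * Pfun Zt (ρ * θ ^ (-((3 : ℝ) / 2))) / ρ

/-- Specific entropy `s(ρ,θ) = S(ρ·θ^{-3/2})`. -/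
noncomputable def sfun (Zt ρ θ : ℝ) : ℝ :=
  Sfun Zt (ρ * θ ^ (-((3 : ℝ) / 2)))

/-!
Write `H(ρ, θ) = ρ (e - θ̃ s)`. Up to the kinetic term, the relative energy is
`[H(ρ, θ) - H(ρ, θ̃)] + [H(ρ, θ̃) - H(ρ̃, θ̃) - ∂_ρ H(ρ̃, θ̃) (ρ - ρ̃)]`.
By the Gibbs relation `θ ds = de + p d(1/ρ)`, the first bracket is the Bregman divergence of
`θ ↦ ρ (θ s - e)`, whose derivative `ρ s` is strictly increasing in `θ`; the second is `θ̃^{5/2}`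
times the Bregman divergence of the free energy profile `(3/2) P(Z) - Z S(Z)` of
`Z = ρ θ̃^{-3/2}`, whose derivative `(5/2) P(Z)/Z - S(Z)` is strictly increasing. By the mean value
theorem, such Bregman divergences are positive off the diagonal.
-/

open Set

def bregman (f f' : ℝ → ℝ) (x y : ℝ) : ℝ :=
  f y - f x - f' x * (y - x)

@[simp]
theorem bregman_self (f f' : ℝ → ℝ) (x : ℝ) : bregman f f' x x = 0 := by
  simp [bregman]

theorem bregman_pos {f f' : ℝ → ℝ} {s : Set ℝ} (hs : s.OrdConnected)
    (hf : ∀ z ∈ s, HasDerivAt f (f' z) z) (hf' : StrictMonoOn f' s)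
    {x y : ℝ} (hx : x ∈ s) (hy : y ∈ s) (hxy : x ≠ y) : 0 < bregman f f' x y := by
  have hderiv {a b : ℝ} (ha : a ∈ s) (hb : b ∈ s) (hab : a < b) :
      ∃ c ∈ Ioo a b, f b - f a = f' c * (b - a) := by
    obtain ⟨c, hc, hslope⟩ := exists_hasDerivAt_eq_slope f f' hab
      (fun z hz => (hf z (hs.out ha hb hz)).continuousAt.continuousWithinAt)
      (fun z hz => hf z (hs.out ha hb (Ioo_subset_Icc_self hz)))
    exact ⟨c, hc, by rw [hslope, div_mul_cancel₀ _ (sub_pos.2 hab).ne']⟩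
  unfold bregman
  rcases hxy.lt_or_gt with hxy | hyx
  · obtain ⟨c, hc, hfc⟩ := hderiv hx hy hxy
    have hxc : f' x < f' c := hf' hx (hs.out hx hy (Ioo_subset_Icc_self hc)) hc.1
    have := mul_pos (sub_pos.2 hxc) (sub_pos.2 hxy)
    linarith
  · obtain ⟨c, hc, hfc⟩ := hderiv hy hx hyx
    have hcx : f' c < f' x := hf' (hs.out hy hx (Ioo_subset_Icc_self hc)) hx hc.2
    have := mul_pos (sub_pos.2 hcx) (sub_pos.2 hyx)
    linarith

theorem bregman_nonneg {f f' : ℝ → ℝ} {s : Set ℝ} (hs : s.OrdConnected)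
    (hf : ∀ z ∈ s, HasDerivAt f (f' z) z) (hf' : StrictMonoOn f' s)
    {x y : ℝ} (hx : x ∈ s) (hy : y ∈ s) : 0 ≤ bregman f f' x y := by
  rcases eq_or_ne x y with rfl | hxy
  · simp
  · exact (bregman_pos hs hf hf' hx hy hxy).le

theorem bregman_eq_zero_iff {f f' : ℝ → ℝ} {s : Set ℝ} (hs : s.OrdConnected)
    (hf : ∀ z ∈ s, HasDerivAt f (f' z) z) (hf' : StrictMonoOn f' s)
    {x y : ℝ} (hx : x ∈ s) (hy : y ∈ s) : bregman f f' x y = 0 ↔ x = y := by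
  refine ⟨fun h => ?_, fun h => h ▸ bregman_self f f' x⟩
  by_contra hxy
  exact (bregman_pos hs hf hf' hx hy hxy).ne' h

theorem hasDerivAt_ite_le {f g : ℝ → ℝ} {a x d : ℝ} (hf : x ≤ a → HasDerivAt f d x)
    (hg : a ≤ x → HasDerivAt g d x) (hfg : f a = g a) :
    HasDerivAt (fun y => if y ≤ a then f y else g y) d x := by
  rcases lt_trichotomy x a with hxa | rfl | hax
  · refine (hf hxa.le).congr_of_eventuallyEq ?_
    filter_upwards [Iio_mem_nhds hxa] with y hy
    exact if_pos (le_of_lt hy)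
  · have hleft : HasDerivWithinAt (fun y => if y ≤ x then f y else g y) d (Iic x) x :=
      (hf le_rfl).hasDerivWithinAt.congr (fun y hy => if_pos hy) (if_pos le_rfl)
    have hright : HasDerivWithinAt (fun y => if y ≤ x then f y else g y) d (Ici x) x :=
      (hg le_rfl).hasDerivWithinAt.congr
        (fun y (hy : x ≤ y) => by
          split_ifs with h
          · rw [le_antisymm h hy, hfg]
          · rfl)
        (by rw [if_pos le_rfl, hfg])
    simpa [Iic_union_Ici] using hleft.union hright
  · refine (hg hax.le).congr_of_eventuallyEq ?_
    filter_upwards [Ioi_mem_nhds hax] with y hy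
    exact if_neg (not_le.2 hy)

theorem rpow_five_halves_eq_mul {x : ℝ} (hx : 0 ≤ x) :
    x ^ ((5 : ℝ) / 2) = x * x ^ ((3 : ℝ) / 2) := by
  rw [← Real.rpow_one_add' hx (by norm_num)]; norm_num

theorem rpow_five_thirds_eq_mul {x : ℝ} (hx : 0 ≤ x) :
    x ^ ((5 : ℝ) / 3) = x * x ^ ((2 : ℝ) / 3) := by
  rw [← Real.rpow_one_add' hx (by norm_num)]; norm_num

section

variable {Zt : ℝ}

noncomputable def Pderiv (Zt Z : ℝ) : ℝ :=
  if Z ≤ Zt then 1 else Z ^ ((2 : ℝ) / 3) * Zt ^ (-((2 : ℝ) / 3))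

noncomputable def Sderiv (Zt Z : ℝ) : ℝ :=
  if Z ≤ Zt then -Z⁻¹ else -(Zt / Z ^ 2)

theorem rpow_five_thirds_mul_rpow_neg_two_thirds (hZt : 0 < Zt) :
    Zt ^ ((5 : ℝ) / 3) * Zt ^ (-((2 : ℝ) / 3)) = Zt := by
  rw [← Real.rpow_add hZt]; norm_num

theorem rpow_two_thirds_mul_rpow_neg_two_thirds (hZt : 0 < Zt) :
    Zt ^ ((2 : ℝ) / 3) * Zt ^ (-((2 : ℝ) / 3)) = 1 := by
  rw [← Real.rpow_add hZt]; norm_num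

theorem hasDerivAt_Pfun (hZt : 0 < Zt) {Z : ℝ} (hZ : 0 < Z) :
    HasDerivAt (Pfun Zt) (Pderiv Zt Z) Z := by
  refine hasDerivAt_ite_le (fun h => ?_) (fun h => ?_) ?_
  · rw [Pderiv, if_pos h]
    exact hasDerivAt_id' Z
  · have hd := (((Real.hasDerivAt_rpow_const (p := (5 : ℝ) / 3) (Or.inl hZ.ne')).const_mul
      (3 / 5)).mul_const (Zt ^ (-((2 : ℝ) / 3)))).add_const ((2 / 5) * Zt)
    refine hd.congr_deriv ?_
    rw [show (5 : ℝ) / 3 - 1 = 2 / 3 by norm_num]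
    unfold Pderiv
    split_ifs with h'
    · rw [le_antisymm h' h, ← rpow_two_thirds_mul_rpow_neg_two_thirds hZt]; ring
    · ring
  · rw [mul_assoc, rpow_five_thirds_mul_rpow_neg_two_thirds hZt]; ring

theorem hasDerivAt_Sfun (hZt : 0 < Zt) {Z : ℝ} (hZ : 0 < Z) :
    HasDerivAt (Sfun Zt) (Sderiv Zt Z) Z := by
  refine hasDerivAt_ite_le (fun h => ?_) (fun h => ?_) ?_
  · have hd := (((hasDerivAt_id' Z).div_const Zt).log (by positivity)).const_sub 1
    refine hd.congr_deriv ?_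
    rw [Sderiv, if_pos h]
    field_simp
  · have hd := (hasDerivAt_const Z Zt).div (hasDerivAt_id' Z) hZ.ne'
    refine hd.congr_deriv ?_
    unfold Sderiv
    split_ifs with h'
    · rw [le_antisymm h' h]; field_simp; ring
    · ring
  · simp [hZt.ne']

/-- The Gibbs relation `θ ds = de + p d(1/ρ)`, written in the variable `Z = ρ θ^{-3/2}`. -/
theorem five_mul_Pfun_eq (Zt : ℝ) {Z : ℝ} (hZ : 0 < Z) :
    5 * Pfun Zt Z = 3 * Z * Pderiv Zt Z - 2 * Z ^ 2 * Sderiv Zt Z := by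
  unfold Pfun Pderiv Sderiv
  split_ifs
  · field_simp; ring
  · rw [rpow_five_thirds_eq_mul hZ.le]
    field_simp
    ring

/- `θ^{5/2} Ffun Zt (ρ θ^{-3/2})` is the free energy density `ρ (e - θ s)`, and
`θ Gfun Zt (ρ θ^{-3/2})` is the Gibbs function `e - θ s + p/ρ`. -/
noncomputable def Ffun (Zt Z : ℝ) : ℝ :=
  3 / 2 * Pfun Zt Z - Z * Sfun Zt Z

noncomputable def Gfun (Zt Z : ℝ) : ℝ :=
  5 / 2 * Pfun Zt Z / Z - Sfun Zt Z

theorem hasDerivAt_Ffun (hZt : 0 < Zt) {Z : ℝ} (hZ : 0 < Z) :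
    HasDerivAt (Ffun Zt) (Gfun Zt Z) Z := by
  have hd := ((hasDerivAt_Pfun hZt hZ).const_mul (3 / 2)).sub
    ((hasDerivAt_id' Z).mul (hasDerivAt_Sfun hZt hZ))
  refine hd.congr_deriv ?_
  have := five_mul_Pfun_eq Zt hZ
  unfold Gfun
  field_simp
  linear_combination (-1 : ℝ) * this

theorem Gfun_of_le {Z : ℝ} (hZ : 0 < Z) (h : Z ≤ Zt) :
    Gfun Zt Z = 3 / 2 + Real.log (Z / Zt) := by
  rw [Gfun, Pfun, Sfun, if_pos h, if_pos h]
  field_simp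
  ring

theorem Gfun_of_lt {Z : ℝ} (hZ : 0 < Z) (h : Zt < Z) :
    Gfun Zt Z = 3 / 2 * (Z ^ ((2 : ℝ) / 3) * Zt ^ (-((2 : ℝ) / 3))) := by
  rw [Gfun, Pfun, Sfun, if_neg h.not_ge, if_neg h.not_ge, rpow_five_thirds_eq_mul hZ.le]
  field_simp
  ring

theorem strictMonoOn_Gfun (hZt : 0 < Zt) : StrictMonoOn (Gfun Zt) (Ioi 0) := by
  intro x (hx : 0 < x) y (hy : 0 < y) hxy
  have hpow {a b : ℝ} (ha : 0 < a) (hab : a < b) :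
      a ^ ((2 : ℝ) / 3) * Zt ^ (-((2 : ℝ) / 3)) < b ^ ((2 : ℝ) / 3) * Zt ^ (-((2 : ℝ) / 3)) :=
    mul_lt_mul_of_pos_right (Real.rpow_lt_rpow ha.le hab (by norm_num)) (by positivity)
  rcases le_or_gt y Zt with hyZ | hZy
  · rw [Gfun_of_le hx (hxy.le.trans hyZ), Gfun_of_le hy hyZ]
    gcongr
  · rw [Gfun_of_lt hy hZy]
    rcases le_or_gt x Zt with hxZ | hZx
    · have hlog : Real.log (x / Zt) ≤ 0 :=
        Real.log_nonpos (by positivity) ((div_le_one hZt).2 hxZ)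
      have := hpow hZt hZy
      rw [rpow_two_thirds_mul_rpow_neg_two_thirds hZt] at this
      rw [Gfun_of_le hx hxZ]
      linarith
    · rw [Gfun_of_lt hx hZx]
      linarith [hpow hx hxy]

theorem strictAntiOn_Sfun (hZt : 0 < Zt) : StrictAntiOn (Sfun Zt) (Ioi 0) := by
  intro x (hx : 0 < x) y (hy : 0 < y) hxy
  unfold Sfun
  split_ifs with hyZ hxZ hxZ
  · gcongr
  · exact absurd (hxy.le.trans hyZ) hxZ
  · have hlog : Real.log (x / Zt) ≤ 0 :=
      Real.log_nonpos (by positivity) ((div_le_one hZt).2 hxZ)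
    have : Zt / y < 1 := (div_lt_one hy).2 (not_le.1 hyZ)
    linarith
  · gcongr

noncomputable def negFreeEnergy (Zt ρ θ : ℝ) : ℝ :=
  θ * ρ * sfun Zt ρ θ - ρ * efun Zt ρ θ

theorem hasDerivAt_negFreeEnergy (hZt : 0 < Zt) {ρ θ : ℝ} (hρ : 0 < ρ) (hθ : 0 < θ) :
    HasDerivAt (negFreeEnergy Zt ρ) (ρ * sfun Zt ρ θ) θ := by
  have hfun : negFreeEnergy Zt ρ = fun θ =>
      θ * ρ * Sfun Zt (ρ * θ ^ (-((3 : ℝ) / 2))) -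
        3 / 2 * θ ^ ((5 : ℝ) / 2) * Pfun Zt (ρ * θ ^ (-((3 : ℝ) / 2))) := by
    funext x
    unfold negFreeEnergy sfun efun
    field_simp
  have hZ : 0 < ρ * θ ^ (-((3 : ℝ) / 2)) := by positivity
  have hdZ := (Real.hasDerivAt_rpow_const (p := -((3 : ℝ) / 2)) (Or.inl hθ.ne')).const_mul ρ
  have hd := (((hasDerivAt_id' θ).mul_const ρ).mul ((hasDerivAt_Sfun hZt hZ).comp θ hdZ)).sub
    (((Real.hasDerivAt_rpow_const (p := (5 : ℝ) / 2) (Or.inl hθ.ne')).const_mul (3 / 2)).mul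
      ((hasDerivAt_Pfun hZt hZ).comp θ hdZ))
  rw [hfun, sfun]
  refine hd.congr_deriv ?_
  have hρ_eq : ρ = ρ * θ ^ (-((3 : ℝ) / 2)) * θ ^ ((3 : ℝ) / 2) := by
    rw [mul_assoc, ← Real.rpow_add hθ]; norm_num
  have hdZ_eq : ρ * (-(3 / 2) * θ ^ (-((3 : ℝ) / 2) - 1)) =
      -(3 / 2) * (ρ * θ ^ (-((3 : ℝ) / 2))) / θ := by
    rw [Real.rpow_sub_one hθ.ne']; ring
  -- the contributions of `∂_θ Z` cancel by the Gibbs relation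
  have hrel := five_mul_Pfun_eq Zt hZ
  simp only [Function.comp_apply]
  rw [hdZ_eq, rpow_five_halves_eq_mul hθ.le, show (5 : ℝ) / 2 - 1 = 3 / 2 by norm_num]
  generalize ρ * θ ^ (-((3 : ℝ) / 2)) = Z at *
  generalize θ ^ ((3 : ℝ) / 2) = A at *
  subst hρ_eq
  field_simp
  linear_combination (-3 * A) * hrel

theorem strictMonoOn_entropy (hZt : 0 < Zt) {ρ : ℝ} (hρ : 0 < ρ) :
    StrictMonoOn (fun θ => ρ * sfun Zt ρ θ) (Ioi 0) := by
  intro x (hx : 0 < x) y (hy : 0 < y) hxy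
  have hZ : ρ * y ^ (-((3 : ℝ) / 2)) < ρ * x ^ (-((3 : ℝ) / 2)) :=
    mul_lt_mul_of_pos_left (Real.rpow_lt_rpow_of_neg hx hxy (by norm_num)) hρ
  exact mul_lt_mul_of_pos_left (strictAntiOn_Sfun hZt (mul_pos hρ (Real.rpow_pos_of_pos hy _))
    (mul_pos hρ (Real.rpow_pos_of_pos hx _)) hZ) hρ

theorem relEnergy_eq_bregman_add_bregman {ρ θ ρt θt : ℝ} (hρ : 0 < ρ) (hρt : 0 < ρt)
    (hθt : 0 < θt) :
    ρ * efun Zt ρ θ - θt * ρ * sfun Zt ρ θ -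
        (efun Zt ρt θt - θt * sfun Zt ρt θt + pfun Zt ρt θt / ρt) * ρ + pfun Zt ρt θt =
      bregman (negFreeEnergy Zt ρ) (fun θ => ρ * sfun Zt ρ θ) θ θt +
        θt ^ ((5 : ℝ) / 2) *
          bregman (Ffun Zt) (Gfun Zt) (ρt * θt ^ (-((3 : ℝ) / 2))) (ρ * θt ^ (-((3 : ℝ) / 2))) := by
  have hA : 0 < θt ^ ((3 : ℝ) / 2) := by positivity
  simp only [bregman, negFreeEnergy, Ffun, Gfun, efun, sfun, pfun]
  rw [rpow_five_halves_eq_mul hθt.le, Real.rpow_neg hθt.le]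
  generalize θt ^ ((3 : ℝ) / 2) = A at *
  field_simp
  ring

end

theorem stmt19_general (Zt : ℝ) (hZt : 0 < Zt) (d : ℕ)
    (ρ θ ρt θt : ℝ) (hρ : 0 < ρ) (hθ : 0 < θ) (hρt : 0 < ρt) (hθt : 0 < θt)
    (u ut : EuclideanSpace ℝ (Fin d)) :
    let E := (1 / 2) * ρ * ‖u - ut‖ ^ 2 + ρ * efun Zt ρ θ - θt * ρ * sfun Zt ρ θ -
      (efun Zt ρt θt - θt * sfun Zt ρt θt + pfun Zt ρt θt / ρt) * ρ + pfun Zt ρt θt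
    0 ≤ E ∧ (E = 0 ↔ ρ = ρt ∧ θ = θt ∧ u = ut) := by
  intro E
  set c := θt ^ (-((3 : ℝ) / 2))
  have hc : 0 < c := by positivity
  set K := 1 / 2 * ρ * ‖u - ut‖ ^ 2
  set T := bregman (negFreeEnergy Zt ρ) (fun θ => ρ * sfun Zt ρ θ) θ θt
  set M := θt ^ ((5 : ℝ) / 2) * bregman (Ffun Zt) (Gfun Zt) (ρt * c) (ρ * c)
  have hE : E = K + T + M := by
    rw [add_assoc, ← relEnergy_eq_bregman_add_bregman hρ hρt hθt]; ring
  have hK : K = 0 ↔ u = ut := by simp [K, hρ.ne', sub_eq_zero]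
  have hG (θ' : ℝ) (hθ' : θ' ∈ Ioi 0) := hasDerivAt_negFreeEnergy hZt hρ hθ'
  have hF (Z : ℝ) (hZ : Z ∈ Ioi 0) := hasDerivAt_Ffun hZt hZ
  have hT := bregman_eq_zero_iff ordConnected_Ioi hG (strictMonoOn_entropy hZt hρ) hθ hθt
  have hT0 := bregman_nonneg ordConnected_Ioi hG (strictMonoOn_entropy hZt hρ) hθ hθt
  have hM : M = 0 ↔ ρ = ρt := by
    rw [mul_eq_zero, bregman_eq_zero_iff ordConnected_Ioi hF (strictMonoOn_Gfun hZt)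
      (mul_pos hρt hc) (mul_pos hρ hc), mul_left_inj' hc.ne', or_iff_right (by positivity),
      eq_comm]
  have hM0 : 0 ≤ M := mul_nonneg (by positivity)
    (bregman_nonneg ordConnected_Ioi hF (strictMonoOn_Gfun hZt) (mul_pos hρt hc) (mul_pos hρ hc))
  have hK0 : 0 ≤ K := by positivity
  rw [hE, add_eq_zero_iff_of_nonneg (add_nonneg hK0 hT0) hM0, add_eq_zero_iff_of_nonneg hK0 hT0,
    hK, hT, hM]
  exact ⟨by positivity, by tauto⟩

/-- The relative energy
`E(ρ,θ,u | ρ̃,θ̃,ũ) = (1/2)·ρ·|u - ũ|² + ρ·e(ρ,θ) - θ̃·ρ·s(ρ,θ)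
- (e(ρ̃,θ̃) - θ̃·s(ρ̃,θ̃) + p(ρ̃,θ̃)/ρ̃)·ρ + p(ρ̃,θ̃)`
is nonnegative and vanishes exactly at coinciding states. -/
theorem stmt19 (Zt : ℝ) (hZt : 0 < Zt) (d : ℕ) (hd : d = 2 ∨ d = 3)
    (ρ θ ρt θt : ℝ) (hρ : 0 < ρ) (hθ : 0 < θ) (hρt : 0 < ρt) (hθt : 0 < θt)
    (u ut : EuclideanSpace ℝ (Fin d)) :
    let E := (1 / 2) * ρ * ‖u - ut‖ ^ 2 + ρ * efun Zt ρ θ - θt * ρ * sfun Zt ρ θ -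
      (efun Zt ρt θt - θt * sfun Zt ρt θt + pfun Zt ρt θt / ρt) * ρ + pfun Zt ρt θt
    0 ≤ E ∧ (E = 0 ↔ ρ = ρt ∧ θ = θt ∧ u = ut) :=
  stmt19_general Zt hZt d ρ θ ρt θt hρ hθ hρt hθt u ut
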